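/- arXiv:math/0610619 — 2 statements merged into one kernel-verified Lean document; each statement's English description precedes it below -/
import Mathlib

section
/- Existence of a pathological scalarly square-integrable process (Example 2.9). Let E be an infinite-dimensional separable real Hilbert space with inner product [·,·]. There exist a probability space (Ω, F, P) and a strongly measurable process φ : [0,1] × Ω → E such that: (i) for every x ∈ E, for P-almost every ω ∈ Ω, the function t ↦ [φ(t, ω), x] belongs to L²(0,1); and (ii) for P-almost every ω ∈ Ω, there exists x ∈ E such that the function t ↦ [φ(t, ω), x] does not belong to L²(0,1) (i.e., ∫₀¹ [φ(t, ω), x]² dt = ∞). -/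
/-!
Take `Ω = (0,1)` with Lebesgue measure and an orthonormal family `e (n, k)`. On the dyadic piece
`(2^{-(n+1)}, 2^{-n}]` of `(0,1]` put `φ(t, ω) = 2^n e (n, k_n ω)`, where `k_n ω = ⌊2^n ω⌋`
numbers the dyadic interval of length `2^{-n}` containing `ω`. The level-`n` piece contributes
`2^{n-1} ⟪e (n, k_n ω), x⟫²` to `∫₀¹ ⟪φ(t, ω), x⟫² dt`. For fixed `x`, averaging over `ω` hits
each `k` with weight at most `2^{-n}`, so by Bessel's inequality the expectation is at most
`‖x‖² / 2`. For fixed `ω`, the vector `x = ∑ 2^{-n/2} e (n, k_n ω)` makes every level contribute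
`1/2`.
-/

open MeasureTheory Set ENNReal Function

def dyadicPiece (n : ℕ) : Set ℝ := Ioc (2⁻¹ ^ (n + 1)) (2⁻¹ ^ n)

noncomputable def dyadicLevel (t : ℝ) : ℕ := Nat.log 2 ⌊t⁻¹⌋₊

noncomputable def dyadicIndex (n : ℕ) (ω : ℝ) : ℕ := ⌊2 ^ n * ω⌋₊

lemma dyadicPiece_subset (n : ℕ) : dyadicPiece n ⊆ Ioc 0 1 := fun _ ht =>
  ⟨(pow_pos (by norm_num) _).trans ht.1, ht.2.trans (pow_le_one₀ (by norm_num) (by norm_num))⟩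

lemma dyadicLevel_eq_of_mem {n : ℕ} {t : ℝ} (ht : t ∈ dyadicPiece n) : dyadicLevel t = n := by
  have ht₀ : 0 < t := (dyadicPiece_subset n ht).1
  refine Nat.log_eq_of_pow_le_of_lt_pow (Nat.le_floor ?_) ((Nat.floor_lt (by positivity)).2 ?_)
  · rw [Nat.cast_pow, Nat.cast_ofNat, le_inv_comm₀ (by positivity) ht₀, ← inv_pow]
    exact ht.2
  · rw [Nat.cast_pow, Nat.cast_ofNat, inv_lt_comm₀ ht₀ (by positivity), ← inv_pow]
    exact ht.1

lemma mem_dyadicPiece_dyadicLevel {t : ℝ} (ht : t ∈ Ioc 0 1) :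
    t ∈ dyadicPiece (dyadicLevel t) := by
  have hfloor : ⌊t⁻¹⌋₊ ≠ 0 :=
    (Nat.floor_pos.2 ((one_le_inv₀ ht.1).2 ht.2)).ne'
  have hle := Nat.pow_log_le_self 2 hfloor
  have hlt := Nat.lt_pow_succ_log_self one_lt_two ⌊t⁻¹⌋₊
  constructor
  · rw [inv_pow, inv_lt_comm₀ (by positivity) ht.1]
    calc t⁻¹ < ⌊t⁻¹⌋₊ + 1 := Nat.lt_floor_add_one _
      _ ≤ 2 ^ (dyadicLevel t + 1) := by exact_mod_cast hlt
  · rw [inv_pow, le_inv_comm₀ ht.1 (by positivity)]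
    calc (2 : ℝ) ^ dyadicLevel t ≤ ⌊t⁻¹⌋₊ := by exact_mod_cast hle
      _ ≤ t⁻¹ := Nat.floor_le (inv_nonneg.2 ht.1.le)

lemma iUnion_dyadicPiece : ⋃ n, dyadicPiece n = Ioc 0 1 :=
  (iUnion_subset dyadicPiece_subset).antisymm fun _ ht =>
    mem_iUnion.2 ⟨_, mem_dyadicPiece_dyadicLevel ht⟩

lemma pairwise_disjoint_dyadicPiece : Pairwise (Disjoint on dyadicPiece) :=
  fun _ _ hmn => disjoint_left.2 fun _ htm htn =>
    hmn ((dyadicLevel_eq_of_mem htm).symm.trans (dyadicLevel_eq_of_mem htn))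

lemma measurableSet_dyadicPiece (n : ℕ) : MeasurableSet (dyadicPiece n) := measurableSet_Ioc

lemma volume_dyadicPiece (n : ℕ) : volume (dyadicPiece n) = ENNReal.ofReal (2⁻¹ ^ (n + 1)) := by
  rw [dyadicPiece, Real.volume_Ioc]
  congr 1
  ring

lemma setLIntegral_Ioo_eq_tsum_of_eqOn_dyadicPiece {f : ℝ → ℝ≥0∞} {c : ℕ → ℝ≥0∞}
    (hf : ∀ n, EqOn f (fun _ => c n) (dyadicPiece n)) :
    ∫⁻ t in Ioo 0 1, f t = ∑' n, c n * ENNReal.ofReal (2⁻¹ ^ (n + 1)) := by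
  rw [Measure.restrict_congr_set Ioo_ae_eq_Ioc, ← iUnion_dyadicPiece,
    lintegral_iUnion measurableSet_dyadicPiece pairwise_disjoint_dyadicPiece]
  refine tsum_congr fun n => ?_
  rw [setLIntegral_congr_fun (measurableSet_dyadicPiece n) (hf n), setLIntegral_const,
    volume_dyadicPiece]

lemma measurable_dyadicLevel : Measurable dyadicLevel :=
  measurable_from_nat.comp (Nat.measurable_floor.comp measurable_inv)

lemma measurable_dyadicIndex (n : ℕ) : Measurable (dyadicIndex n) :=
  Nat.measurable_floor.comp (measurable_const.mul measurable_id)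

lemma volume_dyadicIndex_preimage_le (n k : ℕ) :
    volume (dyadicIndex n ⁻¹' {k} ∩ Ioo 0 1) ≤ ENNReal.ofReal (2⁻¹ ^ n) := by
  have hsub : dyadicIndex n ⁻¹' {k} ∩ Ioo 0 1 ⊆ Ico (k / 2 ^ n) ((k + 1) / 2 ^ n) := by
    rintro ω ⟨hk, hω⟩
    have hfloor := (Nat.floor_eq_iff (mul_nonneg (by positivity) hω.1.le)).1 hk
    constructor
    · rw [div_le_iff₀ (by positivity)]; linarith [hfloor.1]
    · rw [lt_div_iff₀ (by positivity)]; linarith [hfloor.2]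
  calc volume (dyadicIndex n ⁻¹' {k} ∩ Ioo 0 1)
      ≤ volume (Ico (k / 2 ^ n : ℝ) ((k + 1) / 2 ^ n)) := measure_mono hsub
    _ = ENNReal.ofReal (2⁻¹ ^ n) := by
        rw [Real.volume_Ico, ← sub_div, add_sub_cancel_left, inv_pow, one_div]

lemma setLIntegral_comp_dyadicIndex_le (n : ℕ) (g : ℕ → ℝ≥0∞) :
    ∫⁻ ω in Ioo 0 1, g (dyadicIndex n ω) ≤ ENNReal.ofReal (2⁻¹ ^ n) * ∑' k, g k := by
  rw [← lintegral_map measurable_from_nat (measurable_dyadicIndex n), lintegral_countable',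
    ← ENNReal.tsum_mul_left]
  refine ENNReal.tsum_le_tsum fun k => ?_
  rw [mul_comm, Measure.map_apply (measurable_dyadicIndex n) (measurableSet_singleton k),
    Measure.restrict_apply (measurable_dyadicIndex n (measurableSet_singleton k))]
  gcongr
  exact volume_dyadicIndex_preimage_le n k

section OrthonormalFamilies

variable {𝕜 E : Type*} [RCLike 𝕜] [NormedAddCommGroup E] [InnerProductSpace 𝕜 E]

lemma exists_orthonormal_of_not_finiteDimensional (ι : Type*) [Countable ι]
    (hinf : ¬ FiniteDimensional 𝕜 E) : ∃ e : ι → E, Orthonormal 𝕜 e := by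
  let b := Module.Basis.ofVectorSpace 𝕜 E
  have : Infinite (Module.Basis.ofVectorSpaceIndex 𝕜 E) :=
    not_finite_iff_infinite.1 fun _ => hinf (Module.Finite.of_basis b)
  have hli : LinearIndependent 𝕜 (b ∘ Infinite.natEmbedding _) :=
    b.linearIndependent.comp _ (Infinite.natEmbedding _).injective
  obtain ⟨j, hj⟩ := Countable.exists_injective_nat ι
  exact ⟨_, (InnerProductSpace.gramSchmidtNormed_orthonormal hli).comp j hj⟩

lemma Orthonormal.inner_tsum_smul {ι : Type*} {v : ι → E} (hv : Orthonormal 𝕜 v)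
    {b : ι → 𝕜} (hb : Summable fun j => b j • v j) (i : ι) :
    inner 𝕜 (v i) (∑' j, b j • v j) = b i := by
  classical
  rw [← innerSL_apply_apply 𝕜, (innerSL 𝕜 (v i)).map_tsum hb]
  simp [orthonormal_iff_ite.1 hv]

end OrthonormalFamilies

lemma Orthonormal.tsum_ofReal_inner_sq_le {E ι : Type*} [NormedAddCommGroup E]
    [InnerProductSpace ℝ E] {v : ι → E} (hv : Orthonormal ℝ v) (x : E) :
    ∑' i, ENNReal.ofReal (inner ℝ (v i) x ^ 2) ≤ ENNReal.ofReal (‖x‖ ^ 2) := by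
  have hsum := hv.inner_products_summable (x := x)
  have hle := hv.tsum_inner_products_le x
  simp only [Real.norm_eq_abs, sq_abs] at hsum hle
  rw [← ENNReal.ofReal_tsum_of_nonneg (fun _ => sq_nonneg _) hsum]
  exact ENNReal.ofReal_le_ofReal hle

lemma memLp_two_of_lintegral_ofReal_sq_lt_top {α : Type*} [MeasurableSpace α] {μ : Measure α}
    {f : α → ℝ} (hf : AEStronglyMeasurable f μ) (h : ∫⁻ a, ENNReal.ofReal (f a ^ 2) ∂μ < ∞) :
    MemLp f 2 μ :=
  (memLp_two_iff_integrable_sq hf).2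
    ⟨hf.pow 2, (hasFiniteIntegral_iff_ofReal (ae_of_all _ fun _ => sq_nonneg _)).2 h⟩

section

variable {E : Type*} [NormedAddCommGroup E] [InnerProductSpace ℝ E] (e : ℕ × ℕ → E)

noncomputable def pathologicalProcess (t ω : ℝ) : E :=
  (Ioc 0 1).indicator
    (fun s => (2 : ℝ) ^ dyadicLevel s • e (dyadicLevel s, dyadicIndex (dyadicLevel s) ω)) t

lemma pathologicalProcess_of_mem {n : ℕ} {t : ℝ} (ht : t ∈ dyadicPiece n) (ω : ℝ) :
    pathologicalProcess e t ω = (2 : ℝ) ^ n • e (n, dyadicIndex n ω) := by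
  rw [pathologicalProcess, indicator_of_mem (dyadicPiece_subset n ht), dyadicLevel_eq_of_mem ht]

lemma stronglyMeasurable_pathologicalProcess :
    StronglyMeasurable fun q : ℝ × ℝ => pathologicalProcess e q.1 q.2 := by
  let idx : ℝ × ℝ → ℕ × ℕ := fun q => (dyadicLevel q.1, dyadicIndex (dyadicLevel q.1) q.2)
  have hidx : Measurable idx := by
    have hlevel : Measurable fun q : ℝ × ℝ => dyadicLevel q.1 :=
      measurable_dyadicLevel.comp measurable_fst
    refine hlevel.prodMk (Nat.measurable_floor.comp ?_)
    exact (measurable_from_nat.comp hlevel).mul measurable_snd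
  have heq : (fun q : ℝ × ℝ => pathologicalProcess e q.1 q.2) =
      (Prod.fst ⁻¹' Ioc 0 1).indicator ((fun p => (2 : ℝ) ^ p.1 • e p) ∘ idx) := by
    ext q
    by_cases hq : q.1 ∈ Ioc 0 1 <;> simp [pathologicalProcess, hq, idx]
  rw [heq]
  exact ((StronglyMeasurable.of_discrete).comp_measurable hidx).indicator
    (measurable_fst measurableSet_Ioc)

lemma setLIntegral_inner_pathologicalProcess_sq (x : E) (ω : ℝ) :
    ∫⁻ t in Ioo 0 1, ENNReal.ofReal (inner ℝ (pathologicalProcess e t ω) x ^ 2) =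
      ∑' n, ENNReal.ofReal ((2 ^ n * inner ℝ (e (n, dyadicIndex n ω)) x) ^ 2 * 2⁻¹ ^ (n + 1)) := by
  rw [setLIntegral_Ioo_eq_tsum_of_eqOn_dyadicPiece
    (c := fun n => ENNReal.ofReal ((2 ^ n * inner ℝ (e (n, dyadicIndex n ω)) x) ^ 2))]
  · exact tsum_congr fun n => (ENNReal.ofReal_mul (sq_nonneg _)).symm
  · intro n t ht
    simp only [pathologicalProcess_of_mem e ht, real_inner_smul_left]

variable {e}

lemma lintegral_setLIntegral_inner_pathologicalProcess_sq_lt_top (he : Orthonormal ℝ e) (x : E) :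
    ∫⁻ ω in Ioo 0 1, ∫⁻ t in Ioo 0 1,
      ENNReal.ofReal (inner ℝ (pathologicalProcess e t ω) x ^ 2) < ∞ := by
  let term : ℕ → ℕ → ℝ≥0∞ := fun n k =>
    ENNReal.ofReal ((2 ^ n * inner ℝ (e (n, k)) x) ^ 2 * 2⁻¹ ^ (n + 1))
  have hterm (n k : ℕ) : ENNReal.ofReal (2⁻¹ ^ n) * term n k =
      ENNReal.ofReal 2⁻¹ * ENNReal.ofReal (inner ℝ (e (n, k)) x ^ 2) := by
    rw [← ENNReal.ofReal_mul (by positivity), ← ENNReal.ofReal_mul (by positivity)]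
    congr 1
    simp only [inv_pow]
    field_simp
    ring
  simp_rw [setLIntegral_inner_pathologicalProcess_sq]
  calc ∫⁻ ω in Ioo 0 1, ∑' n, term n (dyadicIndex n ω)
      = ∑' n, ∫⁻ ω in Ioo 0 1, term n (dyadicIndex n ω) :=
        lintegral_tsum fun n =>
          ((measurable_from_nat (f := term n)).comp (measurable_dyadicIndex n)).aemeasurable
    _ ≤ ∑' n, ENNReal.ofReal (2⁻¹ ^ n) * ∑' k, term n k :=
        ENNReal.tsum_le_tsum fun n => setLIntegral_comp_dyadicIndex_le n (term n)
    _ = ENNReal.ofReal 2⁻¹ * ∑' p : ℕ × ℕ, ENNReal.ofReal (inner ℝ (e p) x ^ 2) := by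
        rw [ENNReal.tsum_prod', ← ENNReal.tsum_mul_left]
        refine tsum_congr fun n => ?_
        rw [← ENNReal.tsum_mul_left, ← ENNReal.tsum_mul_left]
        exact tsum_congr (hterm n)
    _ < ∞ := ENNReal.mul_lt_top ofReal_lt_top
        ((he.tsum_ofReal_inner_sq_le x).trans_lt ofReal_lt_top)

lemma ae_memLp_inner_pathologicalProcess (he : Orthonormal ℝ e) (x : E) :
    ∀ᵐ ω ∂volume.restrict (Ioo 0 1),
      MemLp (fun t => inner ℝ (pathologicalProcess e t ω) x) 2 (volume.restrict (Ioo 0 1)) := by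
  have hinner : StronglyMeasurable fun q : ℝ × ℝ => inner ℝ (pathologicalProcess e q.1 q.2) x :=
    (continuous_id.inner continuous_const).comp_stronglyMeasurable
      (stronglyMeasurable_pathologicalProcess e)
  have hint : Measurable fun ω => ∫⁻ t in Ioo 0 1,
      ENNReal.ofReal (inner ℝ (pathologicalProcess e t ω) x ^ 2) :=
    (ENNReal.measurable_ofReal.comp (hinner.measurable.pow_const 2)).lintegral_prod_left'
  filter_upwards [ae_lt_top hint
    (lintegral_setLIntegral_inner_pathologicalProcess_sq_lt_top he x).ne] with ω hω
  exact memLp_two_of_lintegral_ofReal_sq_lt_top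
    (hinner.comp_measurable measurable_prodMk_right).aestronglyMeasurable hω

lemma exists_setLIntegral_inner_pathologicalProcess_sq_eq_top [CompleteSpace E]
    (he : Orthonormal ℝ e) (ω : ℝ) :
    ∃ x : E, ∫⁻ t in Ioo 0 1, ENNReal.ofReal (inner ℝ (pathologicalProcess e t ω) x ^ 2) = ∞ := by
  let v : ℕ → E := fun n => e (n, dyadicIndex n ω)
  have hv : Orthonormal ℝ v := he.comp _ fun m n hmn => (Prod.mk.inj hmn).1
  have hr : √(2⁻¹ : ℝ) < 1 := (Real.sqrt_lt' one_pos).2 (by norm_num)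
  have hsum : Summable fun n => √2⁻¹ ^ n • v n := by
    refine Summable.of_norm_bounded (summable_geometric_of_lt_one (Real.sqrt_nonneg _) hr)
      fun n => ?_
    rw [norm_smul, hv.1, mul_one, norm_pow, Real.norm_of_nonneg (Real.sqrt_nonneg _)]
  refine ⟨∑' n, √2⁻¹ ^ n • v n, ?_⟩
  have hterm (n : ℕ) : ((2 : ℝ) ^ n * √2⁻¹ ^ n) ^ 2 * 2⁻¹ ^ (n + 1) = 2⁻¹ := by
    rw [← mul_pow, ← pow_mul, mul_comm n, pow_mul, mul_pow, Real.sq_sqrt (by norm_num)]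
    simp only [inv_pow]
    field_simp
    ring
  rw [setLIntegral_inner_pathologicalProcess_sq]
  have hcoef (n : ℕ) : inner ℝ (e (n, dyadicIndex n ω)) (∑' m, √2⁻¹ ^ m • v m) = √2⁻¹ ^ n :=
    hv.inner_tsum_smul hsum n
  simp_rw [hcoef, hterm]
  exact ENNReal.tsum_const_eq_top_of_ne_zero (by norm_num)

end

theorem exists_pathological_scalarly_L2_process_general
    (E : Type u) [NormedAddCommGroup E] [InnerProductSpace ℝ E] [CompleteSpace E]
    (hinf : ¬ FiniteDimensional ℝ E) :
    ∃ (Ω : Type) (_ : MeasurableSpace Ω) (P : Measure Ω), IsProbabilityMeasure P ∧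
      ∃ φ : ℝ → Ω → E,
        StronglyMeasurable (fun q : ℝ × Ω => φ q.1 q.2) ∧
        (∀ x : E, ∀ᵐ ω ∂P,
          MemLp (fun t => (inner ℝ (φ t ω) x : ℝ)) 2 (volume.restrict (Set.Ioo (0:ℝ) 1))) ∧
        (∀ᵐ ω ∂P, ∃ x : E,
          ∫⁻ t in Set.Ioo (0:ℝ) 1, ENNReal.ofReal ((inner ℝ (φ t ω) x : ℝ) ^ 2) = ⊤) := by
  obtain ⟨e, he⟩ := exists_orthonormal_of_not_finiteDimensional (𝕜 := ℝ) (ℕ × ℕ) hinf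
  exact ⟨ℝ, inferInstance, volume.restrict (Ioo 0 1), ⟨by simp⟩, pathologicalProcess e,
    stronglyMeasurable_pathologicalProcess e, ae_memLp_inner_pathologicalProcess he,
    ae_of_all _ (exists_setLIntegral_inner_pathologicalProcess_sq_eq_top he)⟩

/-- **Existence of a pathological scalarly square-integrable process** (Example 2.9).
For every infinite-dimensional separable real Hilbert space `E` there exist a
probability space `(Ω, P)` and a strongly measurable process `φ : [0,1] × Ω → E`
such that for every `x ∈ E` the scalar function `t ↦ ⟪φ(t,ω), x⟫` is in `L²(0,1)`
for a.e. `ω`, while for a.e. `ω` there exists `x ∈ E` for which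
`∫₀¹ ⟪φ(t,ω), x⟫² dt = ∞`. -/
theorem exists_pathological_scalarly_L2_process
    (E : Type u) [NormedAddCommGroup E] [InnerProductSpace ℝ E] [CompleteSpace E]
    [TopologicalSpace.SeparableSpace E] (hinf : ¬ FiniteDimensional ℝ E) :
    ∃ (Ω : Type) (_ : MeasurableSpace Ω) (P : Measure Ω), IsProbabilityMeasure P ∧
      ∃ φ : ℝ → Ω → E,
        StronglyMeasurable (fun q : ℝ × Ω => φ q.1 q.2) ∧
        (∀ x : E, ∀ᵐ ω ∂P,
          MemLp (fun t => (inner ℝ (φ t ω) x : ℝ)) 2 (volume.restrict (Set.Ioo (0:ℝ) 1))) ∧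
        (∀ᵐ ω ∂P, ∃ x : E,
          ∫⁻ t in Set.Ioo (0:ℝ) 1, ENNReal.ofReal ((inner ℝ (φ t ω) x : ℝ) ^ 2) = ⊤) :=
  exists_pathological_scalarly_L2_process_general E hinf
end

section
/- Finite-dimensional subspaces are almost isometrically recovered by finite-codimensional quotients (Step 1 in the proof of Theorem 3.6). Let E be a real Banach space and let (x_i*)_{i≥1} be a sequence in the closed unit ball of the dual space E* that is norm-dense in the closed unit ball of E*. For n ≥ 1 set F_n := ∩_{i=1}^n ker(x_i*), a closed linear subspace of E, and let Q_n : E → E/F_n denote the quotient map onto the quotient normed space E/F_n. Then for every finite-dimensional linear subspace G of E and every ε > 0 there exists an index N ≥ 1 such that ‖x‖ ≤ (1 + ε) ‖Q_N x‖_{E/F_N} for all x ∈ G. -/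
open Finset

universe u

/-!
A functional of the dense sequence that is `δ`-close to a norming functional of `w ≠ 0` takes a
value above `(1 - δ) ‖w‖` at `w`, and this strict inequality is open in `w`. By compactness of
the unit sphere of `G`, finitely many indices `i ≤ N` therefore almost norm every unit vector of
`G`. Each of these `x i` has norm at most `1` and vanishes on `F_N`, so it is bounded by the
quotient norm of `E ⧸ F_N`.
-/

theorem ContinuousLinearMap.norm_apply_le_mul_norm_quotient_mk {𝕜 E F : Type*}
    [NontriviallyNormedField 𝕜] [SeminormedAddCommGroup E] [NormedSpace 𝕜 E]
    [SeminormedAddCommGroup F] [NormedSpace 𝕜 F] {S : Submodule 𝕜 E} {f : E →L[𝕜] F}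
    (hS : S ≤ LinearMap.ker (f : E →ₗ[𝕜] F)) (z : E) :
    ‖f z‖ ≤ ‖f‖ * ‖(Submodule.Quotient.mk z : E ⧸ S)‖ := by
  rcases (norm_nonneg f).eq_or_lt' with hf | hf
  · simpa [hf] using f.le_opNorm z
  rw [← div_le_iff₀' hf]
  refine QuotientAddGroup.le_norm_iff.2 fun m hm => (div_le_iff₀' hf).2 ?_
  have hzm : z - m ∈ S := (Submodule.Quotient.eq S).1 hm.symm
  have hfzm : f z = f m := sub_eq_zero.1 (by simpa using hS hzm)
  exact hfzm ▸ f.le_opNorm m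

theorem ContinuousLinearMap.one_sub_mul_norm_lt_apply_of_norm_sub_lt {E : Type*}
    [SeminormedAddCommGroup E] [NormedSpace ℝ E] {f g : E →L[ℝ] ℝ} {u : E} {δ : ℝ}
    (hfu : f u = ‖u‖) (hu : 0 < ‖u‖) (hfg : ‖f - g‖ < δ) : (1 - δ) * ‖u‖ < g u := by
  have h : f u - g u ≤ ‖f - g‖ * ‖u‖ := (le_abs_self _).trans ((f - g).le_opNorm u)
  nlinarith

theorem IsCompact.exists_finset_forall_exists_lt {X ι : Type*} [TopologicalSpace X]
    {K : Set X} (hK : IsCompact K) {P : ι → Prop} {g : ι → X → ℝ} {h : X → ℝ}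
    (hg : ∀ i, Continuous (g i)) (hh : Continuous h)
    (hcover : ∀ x ∈ K, ∃ i, P i ∧ h x < g i x) :
    ∃ T : Finset ι, (∀ i ∈ T, P i) ∧ ∀ x ∈ K, ∃ i ∈ T, h x < g i x := by
  obtain ⟨b, hbP, hb, hKb⟩ := hK.elim_finite_subcover_image (b := {i | P i})
    (c := fun i => {x | h x < g i x}) (fun i _ => isOpen_lt hh (hg i))
    fun x hx => by simpa using hcover x hx
  refine ⟨hb.toFinset, fun i hi => hbP (hb.mem_toFinset.1 hi), fun x hx => ?_⟩
  simpa using hKb hx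

theorem IsCompact.exists_finset_almost_norming {E ι : Type*} [NormedAddCommGroup E]
    [NormedSpace ℝ E] {x : ι → E →L[ℝ] ℝ} {P : ι → Prop}
    (hx_dense : ∀ f : E →L[ℝ] ℝ, ‖f‖ ≤ 1 → ∀ δ : ℝ, 0 < δ → ∃ i, P i ∧ ‖f - x i‖ < δ)
    {K : Set E} (hK : IsCompact K) (hK0 : (0 : E) ∉ K) {δ : ℝ} (hδ : 0 < δ) :
    ∃ T : Finset ι, (∀ i ∈ T, P i) ∧ ∀ w ∈ K, ∃ i ∈ T, (1 - δ) * ‖w‖ < x i w := by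
  refine hK.exists_finset_forall_exists_lt (fun i => (x i).continuous) (by fun_prop)
    fun w hw => ?_
  obtain ⟨f, hf, hfw⟩ := exists_dual_vector'' ℝ w
  obtain ⟨i, hPi, hfi⟩ := hx_dense f hf δ hδ
  exact ⟨i, hPi, (f.one_sub_mul_norm_lt_apply_of_norm_sub_lt hfw
    (norm_pos_iff.2 (ne_of_mem_of_not_mem hw hK0)) hfi)⟩

theorem norm_le_mul_norm_of_forall_norm_eq_one {E F : Type*} [NormedAddCommGroup E]
    [NormedSpace ℝ E] [SeminormedAddCommGroup F] [NormedSpace ℝ F] {G : Submodule ℝ E}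
    {T : E →ₗ[ℝ] F} {c : ℝ} (h : ∀ w ∈ G, ‖w‖ = 1 → 1 ≤ c * ‖T w‖) {v : E} (hv : v ∈ G) :
    ‖v‖ ≤ c * ‖T v‖ := by
  rcases eq_or_ne v 0 with rfl | hv0
  · simp
  have hv_pos := norm_pos_iff.2 hv0
  have hunit := h (‖v‖⁻¹ • v) (G.smul_mem _ hv)
    (by rw [norm_smul, norm_inv, norm_norm, inv_mul_cancel₀ hv_pos.ne'])
  rwa [map_smul, norm_smul, norm_inv, norm_norm, ← mul_assoc, mul_comm c, mul_assoc,
    le_inv_mul_iff₀ hv_pos, mul_one] at hunit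

/-- **Finite-dimensional subspaces are almost isometrically recovered by
finite-codimensional quotients** (Step 1 in the proof of Theorem 3.6). If
`(x_i*)_{i≥1}` is norm-dense in the closed unit ball of `E*` and
`F_n = ∩_{i=1}^n ker x_i*`, then for every finite-dimensional subspace `G ⊆ E` and
every `ε > 0` there is `N ≥ 1` with `‖x‖ ≤ (1+ε) ‖Q_N x‖` for all `x ∈ G`, where
`Q_N : E → E/F_N` is the quotient map. -/
theorem finite_dim_quotient_almost_isometry
    (E : Type u) [NormedAddCommGroup E] [NormedSpace ℝ E]
    (x : ℕ → E →L[ℝ] ℝ)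
    (hx_ball : ∀ i, 1 ≤ i → ‖x i‖ ≤ 1)
    (hx_dense : ∀ f : E →L[ℝ] ℝ, ‖f‖ ≤ 1 → ∀ δ : ℝ, 0 < δ → ∃ i, 1 ≤ i ∧ ‖f - x i‖ < δ)
    (G : Submodule ℝ E) (hG : FiniteDimensional ℝ G)
    (ε : ℝ) (hε : 0 < ε) :
    ∃ N : ℕ, 1 ≤ N ∧ ∀ v : E, v ∈ G →
      ‖v‖ ≤ (1 + ε) *
        ‖(Submodule.Quotient.mk v :
          E ⧸ (⨅ i ∈ Finset.Icc 1 N, LinearMap.ker (x i : E →ₗ[ℝ] ℝ)))‖ := by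
  obtain ⟨T, hT1, hT⟩ := ((isCompact_sphere (0 : G) 1).image continuous_subtype_val)
    |>.exists_finset_almost_norming hx_dense (by simp) (δ := ε / (1 + ε)) (by positivity)
  refine ⟨T.sup id ⊔ 1, le_sup_right, fun v hv => ?_⟩
  refine norm_le_mul_norm_of_forall_norm_eq_one (T := Submodule.mkQ _) (fun w hwG hw => ?_) hv
  obtain ⟨i, hiT, hi⟩ := hT w ⟨⟨w, hwG⟩, by simpa using hw, rfl⟩
  have hiN : i ∈ Icc 1 (T.sup id ⊔ 1) :=
    mem_Icc.2 ⟨hT1 i hiT, le_sup_of_le_left (le_sup (f := id) hiT)⟩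
  calc 1 = (1 + ε) * ((1 - ε / (1 + ε)) * ‖w‖) := by rw [hw]; field_simp; ring
    _ ≤ (1 + ε) * ‖x i w‖ := by gcongr; exact hi.le.trans (Real.le_norm_self _)
    _ ≤ (1 + ε) * ‖Submodule.mkQ _ w‖ := by
      gcongr
      exact ((x i).norm_apply_le_mul_norm_quotient_mk (iInf₂_le i hiN) w).trans
        (mul_le_of_le_one_left (norm_nonneg _) (hx_ball i (hT1 i hiT)))
end
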